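/- In the specific setup below (d = 3, ℓ = 2, n_1 = 4, n_2 = 6, (t_{11},t_{12},t_{13}) = (1,1,1), (t_{21},t_{22},t_{23}) = (1,2,3)): (i) R^𝒳 ≠ 0 for every character 𝒳 of G; and (ii) the monomial X_1^{12} X_3^{24} belongs to tr_{R^G}(R^{(1,0)}) but does not belong to the ideal R^{(1,0)} · R^{(3,0)} of R^G; consequently tr_{R^G}(R^{(1,0)}) strictly contains R^{(1,0)} · R^{(3,0)} (where R^{(3,0)} is the semi-invariants of the inverse character of that of R^{(1,0)}). -/

import Mathlib

open MvPolynomial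

set_option synthInstance.maxHeartbeats 1000000
set_option maxHeartbeats 1000000

noncomputable section

/-- The trace ideal of a module `M` over a commutative ring `A`:
the sum of images of all `A`-linear maps `M → A`. -/
def traceIdeal (A : Type*) [CommRing A] (M : Type*) [AddCommGroup M] [Module A M] :
    Ideal A :=
  ⨆ f : M →ₗ[A] A, LinearMap.range f

variable {K : Type} [Field K] {d : ℕ}

/-- The subgroup of `K`-algebra automorphisms of `K[X_1,…,X_d]` generated
by a family `σ`. -/
def Ggen {ℓ : ℕ} (σ : Fin ℓ → (MvPolynomial (Fin d) K ≃ₐ[K] MvPolynomial (Fin d) K)) :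
    Subgroup (MvPolynomial (Fin d) K ≃ₐ[K] MvPolynomial (Fin d) K) :=
  Subgroup.closure (Set.range σ)

/-- The ring of invariants `R^G`, as a subalgebra of `R = K[X_1,…,X_d]`. -/
def invariants (G : Subgroup (MvPolynomial (Fin d) K ≃ₐ[K] MvPolynomial (Fin d) K)) :
    Subalgebra K (MvPolynomial (Fin d) K) where
  carrier := {a | ∀ g ∈ G, g a = a}
  mul_mem' := fun ha hb g hg => by rw [map_mul, ha g hg, hb g hg]
  one_mem' := fun g hg => map_one _
  add_mem' := fun ha hb g hg => by rw [map_add, ha g hg, hb g hg]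
  zero_mem' := fun g hg => map_zero _
  algebraMap_mem' := fun r g hg => AlgEquiv.commutes g r

/-- The semi-invariants `R^𝒳` of weight a character `𝒳 : G → Kˣ`, as an
`R^G`-submodule of `R`. -/
def semiInvariants (G : Subgroup (MvPolynomial (Fin d) K ≃ₐ[K] MvPolynomial (Fin d) K))
    (χ : G →* Kˣ) : Submodule (invariants G) (MvPolynomial (Fin d) K) where
  carrier := {a | ∀ g : G, (g : MvPolynomial (Fin d) K ≃ₐ[K] MvPolynomial (Fin d) K) a
      = (χ g : K) • a}
  add_mem' := fun ha hb g => by rw [map_add, ha g, hb g, smul_add]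
  zero_mem' := fun g => by rw [map_zero, smul_zero]
  smul_mem' := fun s a ha g => by
    have h1 : (s • a : MvPolynomial (Fin d) K) = (s : MvPolynomial (Fin d) K) * a := rfl
    rw [h1, map_mul, s.2 g g.2, ha g, mul_smul_comm]

/-- The ideal `N₁ · N₂` of `R^G` generated by all products of an element of `N₁`
with an element of `N₂`, for `R^G`-submodules `N₁, N₂` of `R`. -/
def prodIdeal (G : Subgroup (MvPolynomial (Fin d) K ≃ₐ[K] MvPolynomial (Fin d) K))
    (N₁ N₂ : Submodule (invariants G) (MvPolynomial (Fin d) K)) : Ideal (invariants G) :=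
  Ideal.span {a : invariants G | ∃ f ∈ N₁, ∃ h ∈ N₂, (a : MvPolynomial (Fin d) K) = f * h}

/-- A (diagonalizable) algebra automorphism of `K[X_1,…,X_d]` is a pseudo-reflection
if it scales each variable and its eigenspace for the eigenvalue `1` on `K^d`
has dimension `d - 1`, i.e. exactly `d - 1` of the scaling factors equal `1`. -/
def IsPseudoReflection (g : MvPolynomial (Fin d) K ≃ₐ[K] MvPolynomial (Fin d) K) : Prop :=
  ∃ c : Fin d → K, (∀ j, g (X j) = c j • X j) ∧
    Nat.card {j : Fin d // c j = 1} = d - 1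


lemma mem_Ggen {ℓ : ℕ} (σ : Fin ℓ → (MvPolynomial (Fin d) K ≃ₐ[K] MvPolynomial (Fin d) K))
    (i : Fin ℓ) : σ i ∈ Ggen σ :=
  Subgroup.subset_closure (Set.mem_range_self i)

/-- The semi-invariants of the character determined on the generators `σ_i` by the
values `c i ∈ K`, as an `R^G`-submodule of `R`. -/
def semiInvariantsOn {ℓ : ℕ}
    (σ : Fin ℓ → (MvPolynomial (Fin d) K ≃ₐ[K] MvPolynomial (Fin d) K))
    (c : Fin ℓ → K) : Submodule (invariants (Ggen σ)) (MvPolynomial (Fin d) K) where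
  carrier := {a | ∀ i, σ i a = c i • a}
  add_mem' := fun ha hb i => by rw [map_add, ha i, hb i, smul_add]
  zero_mem' := fun i => by rw [map_zero, smul_zero]
  smul_mem' := fun s a ha i => by
    have h1 : (s • a : MvPolynomial (Fin d) K) = (s : MvPolynomial (Fin d) K) * a := rfl
    rw [h1, map_mul, s.2 (σ i) (mem_Ggen σ i), ha i, mul_smul_comm]


/-!
Both generators act diagonally, so the monomial `X₀^a X₁^b X₂^c` is a semi-invariant on which
`σ₁` and `σ₂` act by `ξ₁^(a+b+c)` and `ξ₂^(a+2b+3c)`; solving these two congruences gives a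
nonzero semi-invariant of every weight. For a weight `(s, 0)` with `s` odd, comparing the parities
of the two exponents shows that every monomial of a semi-invariant contains `X₁`. Hence `X₁²`
divides every element of `R^{(1,0)} · R^{(3,0)}`, but not `X₀¹² X₂²⁴`. On the other hand
`u ↦ X₀¹¹ X₂²¹ u / X₁` is an `R^G`-linear map `R^{(1,0)} → R^G` sending `X₀ X₁ X₂³` to
`X₀¹² X₂²⁴`.
-/

section General

variable {k R : Type*} [CommRing k] [CommRing R] [IsDomain R] [Algebra k R]

lemma mem_traceIdeal_of_forall_mul_eq {S : Subalgebra k R} {N : Submodule S R} {m v : R}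
    (hm : m ≠ 0) (hN : ∀ u ∈ N, ∃ a ∈ S, m * a = v * u) {u₀ : R} (hu₀ : u₀ ∈ N) {a₀ : S}
    (ha₀ : m * a₀ = v * u₀) : a₀ ∈ traceIdeal S N := by
  choose q hqS hq using hN
  -- `q u = v * u / m`
  let F : N →ₗ[S] S :=
    { toFun := fun u => ⟨q u u.2, hqS u u.2⟩
      map_add' := fun u u' => Subtype.ext <| mul_left_cancel₀ hm <| by
        show m * q _ _ = m * (q _ _ + q _ _)
        rw [mul_add, hq, hq, hq]
        exact mul_add _ _ _
      map_smul' := fun s u => Subtype.ext <| mul_left_cancel₀ hm <| by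
        show m * q _ _ = m * (s * q _ _)
        rw [mul_left_comm, hq, hq]
        exact mul_left_comm _ _ _ }
  refine le_iSup (fun f : N →ₗ[S] S => LinearMap.range f) F ⟨⟨u₀, hu₀⟩, ?_⟩
  exact Subtype.ext <| mul_left_cancel₀ hm <| (hq u₀ hu₀).trans ha₀.symm

end General

section Diagonal

variable {σ' : Type*} {g : MvPolynomial σ' K ≃ₐ[K] MvPolynomial σ' K} {c : σ' → K}

lemma X_dvd_of_forall_coeff_eq_zero {i : σ'} {p : MvPolynomial σ' K}
    (h : ∀ e : σ' →₀ ℕ, e i = 0 → coeff e p = 0) : X i ∣ p := by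
  rw [X_dvd_iff_modMonomial_eq_zero]
  ext e
  by_cases he : Finsupp.single i 1 ≤ e
  · rw [coeff_modMonomial_of_le _ he, coeff_zero]
  · rw [coeff_modMonomial_of_not_le _ he, coeff_zero,
      h e (by simpa [Finsupp.single_le_iff] using he)]

lemma apply_monomial_of_apply_X [Fintype σ'] (hg : ∀ j, g (X j) = c j • X j) (e : σ' →₀ ℕ)
    (a : K) : g (monomial e a) = (∏ j, c j ^ e j) • monomial e a := by
  classical
  rw [monomial_eq, Finsupp.prod_fintype _ _ (fun _ => pow_zero _), map_mul, map_prod]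
  simp only [map_pow, hg, smul_pow, Finset.prod_smul, ← algebraMap_eq, AlgEquiv.commutes,
    mul_smul_comm]

lemma coeff_apply_of_apply_X [Fintype σ'] (hg : ∀ j, g (X j) = c j • X j)
    (p : MvPolynomial σ' K) (e : σ' →₀ ℕ) : coeff e (g p) = (∏ j, c j ^ e j) * coeff e p := by
  classical
  induction p using MvPolynomial.induction_on' with
  | monomial e' a =>
    rw [apply_monomial_of_apply_X hg, coeff_smul, coeff_monomial, smul_eq_mul]
    split_ifs with h
    · rw [h]
    · rw [mul_zero, mul_zero]
  | add p q hp hq => rw [map_add, coeff_add, coeff_add, hp, hq, mul_add]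

lemma pow_apply_X_of_apply_X (hg : ∀ j, g (X j) = c j • X j) (n : ℕ) (j : σ') :
    (g ^ n) (X j) = c j ^ n • X j := by
  induction n with
  | zero => rw [pow_zero, pow_zero, one_smul, AlgEquiv.one_apply]
  | succ n ih => rw [pow_succ', AlgEquiv.mul_apply, ih, map_smul, hg, smul_smul, ← pow_succ]

lemma pow_eq_one_of_apply_X (hg : ∀ j, g (X j) = c j • X j) {n : ℕ}
    (hc : ∀ j, c j ^ n = 1) : g ^ n = 1 :=
  AlgEquiv.coe_toAlgHom_injective <| MvPolynomial.algHom_ext fun j => by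
    simp [pow_apply_X_of_apply_X hg, hc]

end Diagonal

section Generators

variable {ℓ : ℕ} {σ : Fin ℓ → (MvPolynomial (Fin d) K ≃ₐ[K] MvPolynomial (Fin d) K)}

lemma mem_invariants_Ggen {p : MvPolynomial (Fin d) K} (h : ∀ i, σ i p = p) :
    p ∈ invariants (Ggen σ) := fun _ hg =>
  (Subgroup.closure_le (MulAction.stabilizer _ p)).mpr (by rintro _ ⟨i, rfl⟩; exact h i) hg

lemma semiInvariantsOn_le_semiInvariants (χ : Ggen σ →* Kˣ) :
    semiInvariantsOn σ (fun i => (χ ⟨σ i, mem_Ggen σ i⟩ : K)) ≤ semiInvariants (Ggen σ) χ := by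
  intro p hp
  rintro ⟨g, hg⟩
  induction hg using Subgroup.closure_induction with
  | mem g hg =>
    obtain ⟨i, rfl⟩ := hg
    exact hp i
  | one =>
    change (1 : MvPolynomial (Fin d) K ≃ₐ[K] MvPolynomial (Fin d) K) p = (χ 1 : K) • p
    rw [map_one, Units.val_one, one_smul, AlgEquiv.one_apply]
  | mul g h hg hh ihg ihh =>
    change g (h p) = (χ (⟨g, hg⟩ * ⟨h, hh⟩) : K) • p
    rw [ihh, map_smul, ihg, smul_smul, map_mul, Units.val_mul, mul_comm]
  | inv g hg ih =>
    change g⁻¹ p = (χ (⟨g, hg⟩ : Ggen σ)⁻¹ : K) • p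
    apply g.injective
    rw [map_smul, ih, smul_smul, map_inv, ← Units.val_mul, inv_mul_cancel, Units.val_one,
      one_smul, ← AlgEquiv.mul_apply, mul_inv_cancel, AlgEquiv.one_apply]

lemma mul_mem_semiInvariantsOn {c c' : Fin ℓ → K} {a b : MvPolynomial (Fin d) K}
    (ha : a ∈ semiInvariantsOn σ c) (hb : b ∈ semiInvariantsOn σ c') :
    a * b ∈ semiInvariantsOn σ (c * c') := fun i => by
  rw [map_mul, ha i, hb i, smul_mul_smul_comm]
  rfl

lemma mem_invariants_Ggen_of_mul_mem {c : Fin ℓ → K} {m a : MvPolynomial (Fin d) K}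
    (hm0 : m ≠ 0) (hm : m ∈ semiInvariantsOn σ c) (hma : m * a ∈ semiInvariantsOn σ c) :
    a ∈ invariants (Ggen σ) := by
  refine mem_invariants_Ggen fun i => ?_
  have hc : c i ≠ 0 := fun h => hm0 <| (σ i).injective <| by rw [hm i, h, zero_smul, map_zero]
  have := hma i
  rw [map_mul, hm i, smul_mul_assoc] at this
  exact mul_left_cancel₀ hm0 (smul_right_injective _ hc this)

end Generators

section ProductIdeal

variable (G : Subgroup (MvPolynomial (Fin d) K ≃ₐ[K] MvPolynomial (Fin d) K))
  {N₁ N₂ : Submodule (invariants G) (MvPolynomial (Fin d) K)}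

lemma prodIdeal_le_traceIdeal (hmul : ∀ f ∈ N₁, ∀ h ∈ N₂, f * h ∈ invariants G) :
    prodIdeal G N₁ N₂ ≤ traceIdeal (invariants G) N₁ := by
  refine Ideal.span_le.mpr ?_
  rintro a ⟨f, hf, h, hh, ha⟩
  refine mem_traceIdeal_of_forall_mul_eq one_ne_zero (v := h) (fun u hu => ?_) hf ?_
  · exact ⟨u * h, hmul u hu h hh, by rw [one_mul, mul_comm]⟩
  · rw [one_mul, ha, mul_comm]

lemma dvd_of_mem_prodIdeal {p q : MvPolynomial (Fin d) K} (h₁ : ∀ f ∈ N₁, p ∣ f)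
    (h₂ : ∀ h ∈ N₂, q ∣ h) {a : invariants G} (ha : a ∈ prodIdeal G N₁ N₂) :
    p * q ∣ (a : MvPolynomial (Fin d) K) := by
  suffices prodIdeal G N₁ N₂ ≤ (Ideal.span {p * q}).comap (invariants G).val from
    Ideal.mem_span_singleton.mp (this ha)
  refine Ideal.span_le.mpr ?_
  rintro a ⟨f, hf, h, hh, ha⟩
  rw [SetLike.mem_coe, Ideal.mem_comap, Subalgebra.coe_val, ha, Ideal.mem_span_singleton]
  exact mul_dvd_mul (h₁ f hf) (h₂ h hh)

end ProductIdeal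

lemma exists_units_val_apply_eq_pow {G : Type*} [Group G] (χ : G →* Kˣ) {g : G} {n : ℕ}
    [NeZero n] (hg : g ^ n = 1) {ζ : K} (hζ : IsPrimitiveRoot ζ n) : ∃ s, (χ g : K) = ζ ^ s := by
  obtain ⟨s, -, hs⟩ := hζ.eq_pow_of_pow_eq_one (ξ := (χ g : K))
    (by rw [← Units.val_pow_eq_pow_val, ← map_pow, hg, map_one, Units.val_one])
  exact ⟨s, hs.symm⟩

section Example

variable {ξ₁ ξ₂ : K} {σ : Fin 2 → (MvPolynomial (Fin 3) K ≃ₐ[K] MvPolynomial (Fin 3) K)}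

lemma X_pow_mul_mem_semiInvariantsOn (hσ₁ : ∀ j, σ 0 (X j) = ξ₁ • X j)
    (hσ₂ : ∀ j, σ 1 (X j) = ![ξ₂, ξ₂ ^ 2, ξ₂ ^ 3] j • X j) (h4 : ξ₁ ^ 4 = 1) (h6 : ξ₂ ^ 6 = 1)
    {a b c s t : ℕ} (hs : a + b + c ≡ s [MOD 4]) (ht : a + 2 * b + 3 * c ≡ t [MOD 6]) :
    X 0 ^ a * X 1 ^ b * X 2 ^ c ∈ semiInvariantsOn σ ![ξ₁ ^ s, ξ₂ ^ t] := by
  rw [← pow_eq_pow_of_modEq hs h4, ← pow_eq_pow_of_modEq ht h6]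
  refine Fin.forall_fin_two.mpr ⟨?_, ?_⟩
  · simp only [map_mul, map_pow, hσ₁, smul_pow, smul_mul_smul_comm]
    simp [pow_add]
  · simp only [map_mul, map_pow, hσ₂, smul_pow, smul_mul_smul_comm]
    simp [pow_add, pow_mul]

lemma X_one_dvd_of_mem_semiInvariantsOn (hσ₁ : ∀ j, σ 0 (X j) = ξ₁ • X j)
    (hσ₂ : ∀ j, σ 1 (X j) = ![ξ₂, ξ₂ ^ 2, ξ₂ ^ 3] j • X j) (hξ₁ : IsPrimitiveRoot ξ₁ 4)
    (hξ₂ : IsPrimitiveRoot ξ₂ 6) {s : ℕ} (hs : Odd s) {f : MvPolynomial (Fin 3) K}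
    (hf : f ∈ semiInvariantsOn σ ![ξ₁ ^ s, 1]) : X 1 ∣ f := by
  refine X_dvd_of_forall_coeff_eq_zero fun e he1 => ?_
  by_contra hne
  have h0 : ξ₁ ^ (e 0 + e 1 + e 2) = ξ₁ ^ s := by
    have := congrArg (coeff e) (hf 0)
    rw [coeff_apply_of_apply_X hσ₁, coeff_smul, smul_eq_mul] at this
    simpa [Finset.prod_pow_eq_pow_sum, Fin.sum_univ_three] using mul_right_cancel₀ hne this
  have h1 : ξ₂ ^ (e 0 + 2 * e 1 + 3 * e 2) = 1 := by
    have hf1 : σ 1 f = f := by simpa using hf 1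
    have := congrArg (coeff e) hf1
    rw [coeff_apply_of_apply_X hσ₂] at this
    simpa [Fin.prod_univ_three, pow_add, pow_mul] using
      mul_right_cancel₀ hne (this.trans (one_mul (coeff e f)).symm)
  have m4 : e 0 + e 1 + e 2 ≡ s [MOD 4] := by
    rwa [(hξ₁.isOfFinOrder four_ne_zero).pow_eq_pow_iff_modEq, ← hξ₁.eq_orderOf] at h0
  have m6 : 6 ∣ e 0 + 2 * e 1 + 3 * e 2 := (hξ₂.pow_eq_one_iff_dvd _).mp h1
  obtain ⟨k, rfl⟩ := hs
  unfold Nat.ModEq at m4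
  omega

lemma semiInvariants_Ggen_ne_bot (hσ₁ : ∀ j, σ 0 (X j) = ξ₁ • X j)
    (hσ₂ : ∀ j, σ 1 (X j) = ![ξ₂, ξ₂ ^ 2, ξ₂ ^ 3] j • X j) (hξ₁ : IsPrimitiveRoot ξ₁ 4)
    (hξ₂ : IsPrimitiveRoot ξ₂ 6) (χ : Ggen σ →* Kˣ) : semiInvariants (Ggen σ) χ ≠ ⊥ := by
  have h4 := hξ₁.pow_eq_one
  have h6 := hξ₂.pow_eq_one
  obtain ⟨s, hs⟩ := exists_units_val_apply_eq_pow χ (g := ⟨σ 0, mem_Ggen σ 0⟩)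
    (Subtype.ext <| pow_eq_one_of_apply_X hσ₁ fun _ => h4) hξ₁
  obtain ⟨t, ht⟩ := exists_units_val_apply_eq_pow χ (g := ⟨σ 1, mem_Ggen σ 1⟩)
    (Subtype.ext <| pow_eq_one_of_apply_X hσ₂ fun j => by
      fin_cases j <;> simp [pow_right_comm ξ₂ _ 6, h6]) hξ₂
  have hχ : (fun i => (χ ⟨σ i, mem_Ggen σ i⟩ : K)) = ![ξ₁ ^ s, ξ₂ ^ t] :=
    funext <| Fin.forall_fin_two.mpr ⟨hs, ht⟩
  have hm := X_pow_mul_mem_semiInvariantsOn (c := 0) hσ₁ hσ₂ h4 h6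
    (a := 4 * s + 11 * t) (b := s + t) (s := s) (t := t)
    (by unfold Nat.ModEq; omega) (by unfold Nat.ModEq; omega)
  rw [← hχ] at hm
  intro hbot
  have := semiInvariantsOn_le_semiInvariants χ hm
  rw [hbot, Submodule.mem_bot] at this
  simp [X_ne_zero] at this

lemma X_zero_pow_mul_X_two_pow_mem_invariants (hσ₁ : ∀ j, σ 0 (X j) = ξ₁ • X j)
    (hσ₂ : ∀ j, σ 1 (X j) = ![ξ₂, ξ₂ ^ 2, ξ₂ ^ 3] j • X j) (h4 : ξ₁ ^ 4 = 1) (h6 : ξ₂ ^ 6 = 1) :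
    X 0 ^ 12 * X 2 ^ 24 ∈ invariants (Ggen σ) := by
  have hm := X_pow_mul_mem_semiInvariantsOn (a := 12) (b := 0) (c := 24) (s := 0) (t := 0)
    hσ₁ hσ₂ h4 h6 rfl rfl
  simp only [pow_zero, mul_one] at hm
  exact mem_invariants_Ggen <| Fin.forall_fin_two.mpr ⟨by simpa using hm 0, by simpa using hm 1⟩

lemma mem_traceIdeal_semiInvariantsOn (hσ₁ : ∀ j, σ 0 (X j) = ξ₁ • X j)
    (hσ₂ : ∀ j, σ 1 (X j) = ![ξ₂, ξ₂ ^ 2, ξ₂ ^ 3] j • X j) (hξ₁ : IsPrimitiveRoot ξ₁ 4)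
    (hξ₂ : IsPrimitiveRoot ξ₂ 6) {a : invariants (Ggen σ)}
    (ha : (a : MvPolynomial (Fin 3) K) = X 0 ^ 12 * X 2 ^ 24) :
    a ∈ traceIdeal (invariants (Ggen σ)) (semiInvariantsOn σ ![ξ₁, 1]) := by
  have h4 := hξ₁.pow_eq_one
  have h6 := hξ₂.pow_eq_one
  have hX : X 1 ∈ semiInvariantsOn σ ![ξ₁, ξ₂ ^ 2] := by
    simpa using X_pow_mul_mem_semiInvariantsOn (a := 0) (b := 1) (c := 0) (s := 1) (t := 2)
      hσ₁ hσ₂ h4 h6 rfl rfl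
  have hv := X_pow_mul_mem_semiInvariantsOn (a := 11) (b := 0) (c := 21) (s := 0) (t := 2)
    hσ₁ hσ₂ h4 h6 rfl rfl
  have hu₀ : X 0 * X 1 * X 2 ^ 3 ∈ semiInvariantsOn σ ![ξ₁, 1] := by
    simpa using X_pow_mul_mem_semiInvariantsOn (a := 1) (b := 1) (c := 3) (s := 1) (t := 0)
      hσ₁ hσ₂ h4 h6 rfl rfl
  refine mem_traceIdeal_of_forall_mul_eq (X_ne_zero 1) (v := X 0 ^ 11 * X 2 ^ 21) (fun u hu => ?_)
    hu₀ (by rw [ha]; ring)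
  obtain ⟨q, rfl⟩ := X_one_dvd_of_mem_semiInvariantsOn hσ₁ hσ₂ hξ₁ hξ₂ odd_one
    (by rwa [pow_one])
  refine ⟨X 0 ^ 11 * X 2 ^ 21 * q, mem_invariants_Ggen_of_mul_mem (X_ne_zero 1) hX ?_, by ring⟩
  convert mul_mem_semiInvariantsOn hv hu using 1
  · congr 1
    ext i
    fin_cases i <;> simp
  · ring

lemma notMem_prodIdeal_semiInvariantsOn (hσ₁ : ∀ j, σ 0 (X j) = ξ₁ • X j)
    (hσ₂ : ∀ j, σ 1 (X j) = ![ξ₂, ξ₂ ^ 2, ξ₂ ^ 3] j • X j) (hξ₁ : IsPrimitiveRoot ξ₁ 4)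
    (hξ₂ : IsPrimitiveRoot ξ₂ 6) {a : invariants (Ggen σ)}
    (ha : (a : MvPolynomial (Fin 3) K) = X 0 ^ 12 * X 2 ^ 24) :
    a ∉ prodIdeal (Ggen σ) (semiInvariantsOn σ ![ξ₁, 1]) (semiInvariantsOn σ ![ξ₁ ^ 3, 1]) := by
  intro hmem
  have hdvd := dvd_of_mem_prodIdeal _
    (fun _ hf => X_one_dvd_of_mem_semiInvariantsOn hσ₁ hσ₂ hξ₁ hξ₂ odd_one (by rwa [pow_one]))
    (fun _ hh => X_one_dvd_of_mem_semiInvariantsOn hσ₁ hσ₂ hξ₁ hξ₂ (by decide) hh) hmem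
  rw [ha] at hdvd
  rcases X_prime.dvd_or_dvd (dvd_of_mul_right_dvd hdvd) with h | h <;>
    simpa using X_dvd_X.mp (X_prime.dvd_of_dvd_pow h)

lemma prodIdeal_semiInvariantsOn_le_traceIdeal (hξ₁ : ξ₁ ^ 4 = 1) :
    prodIdeal (Ggen σ) (semiInvariantsOn σ ![ξ₁, 1]) (semiInvariantsOn σ ![ξ₁ ^ 3, 1]) ≤
      traceIdeal (invariants (Ggen σ)) (semiInvariantsOn σ ![ξ₁, 1]) := by
  refine prodIdeal_le_traceIdeal _ fun f hf h hh => mem_invariants_Ggen fun i => ?_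
  have := mul_mem_semiInvariantsOn hf hh i
  fin_cases i <;> simpa [← pow_succ', hξ₁] using this

end Example

theorem statement18_general
    (ξ₁ ξ₂ : K) (hξ₁ : IsPrimitiveRoot ξ₁ 4) (hξ₂ : IsPrimitiveRoot ξ₂ 6)
    (σ : Fin 2 → (MvPolynomial (Fin 3) K ≃ₐ[K] MvPolynomial (Fin 3) K))
    (hσ₁ : ∀ j, σ 0 (X j) = ξ₁ • X j)
    (hσ₂0 : σ 1 (X 0) = ξ₂ • X 0)
    (hσ₂1 : σ 1 (X 1) = ξ₂ ^ 2 • X 1)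
    (hσ₂2 : σ 1 (X 2) = ξ₂ ^ 3 • X 2) :
    (∀ χ : Ggen σ →* Kˣ, semiInvariants (Ggen σ) χ ≠ ⊥) ∧
    (∃ a : invariants (Ggen σ),
      (a : MvPolynomial (Fin 3) K) = X 0 ^ 12 * X 2 ^ 24 ∧
      a ∈ traceIdeal (invariants (Ggen σ)) (semiInvariantsOn σ ![ξ₁, 1]) ∧
      a ∉ prodIdeal (Ggen σ) (semiInvariantsOn σ ![ξ₁, 1])
        (semiInvariantsOn σ ![ξ₁ ^ 3, 1])) ∧
    prodIdeal (Ggen σ) (semiInvariantsOn σ ![ξ₁, 1]) (semiInvariantsOn σ ![ξ₁ ^ 3, 1]) <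
      traceIdeal (invariants (Ggen σ)) (semiInvariantsOn σ ![ξ₁, 1]) := by
  have hσ₂ : ∀ j, σ 1 (X j) = ![ξ₂, ξ₂ ^ 2, ξ₂ ^ 3] j • X j := fun j => by
    fin_cases j <;> simpa
  have hw := X_zero_pow_mul_X_two_pow_mem_invariants hσ₁ hσ₂ hξ₁.pow_eq_one hξ₂.pow_eq_one
  have htrace := mem_traceIdeal_semiInvariantsOn hσ₁ hσ₂ hξ₁ hξ₂ (a := ⟨_, hw⟩) rfl
  have hprod := notMem_prodIdeal_semiInvariantsOn hσ₁ hσ₂ hξ₁ hξ₂ (a := ⟨_, hw⟩) rfl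
  exact ⟨semiInvariants_Ggen_ne_bot hσ₁ hσ₂ hξ₁ hξ₂, ⟨⟨_, hw⟩, rfl, htrace, hprod⟩,
    lt_of_le_of_ne (prodIdeal_semiInvariantsOn_le_traceIdeal hξ₁.pow_eq_one)
      fun h => hprod (h ▸ htrace)⟩

/-- Example 3.10: for `d = 3`, `G = ⟨σ₁, σ₂⟩` with `σ₁ = diag(ξ₁, ξ₁, ξ₁)`
(`ξ₁` a primitive 4th root of unity) and `σ₂ = diag(ξ₂, ξ₂², ξ₂³)` (`ξ₂` a primitive
6th root of unity): (i) every semi-invariant module `R^𝒳` is nonzero, and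
(ii) `X₁¹² X₃²⁴` lies in `tr_{R^G}(R^{(1,0)})` but not in `R^{(1,0)} · R^{(3,0)}`;
consequently `tr_{R^G}(R^{(1,0)}) ⊋ R^{(1,0)} · R^{(3,0)}`. -/
theorem statement18 [IsAlgClosed K]
    (h2 : (2 : K) ≠ 0) (h3 : (3 : K) ≠ 0)
    (ξ₁ ξ₂ : K) (hξ₁ : IsPrimitiveRoot ξ₁ 4) (hξ₂ : IsPrimitiveRoot ξ₂ 6)
    (σ : Fin 2 → (MvPolynomial (Fin 3) K ≃ₐ[K] MvPolynomial (Fin 3) K))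
    (hσ₁ : ∀ j, σ 0 (X j) = ξ₁ • X j)
    (hσ₂0 : σ 1 (X 0) = ξ₂ • X 0)
    (hσ₂1 : σ 1 (X 1) = ξ₂ ^ 2 • X 1)
    (hσ₂2 : σ 1 (X 2) = ξ₂ ^ 3 • X 2) :
    (∀ χ : Ggen σ →* Kˣ, semiInvariants (Ggen σ) χ ≠ ⊥) ∧
    (∃ a : invariants (Ggen σ),
      (a : MvPolynomial (Fin 3) K) = X 0 ^ 12 * X 2 ^ 24 ∧
      a ∈ traceIdeal (invariants (Ggen σ)) (semiInvariantsOn σ ![ξ₁, 1]) ∧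
      a ∉ prodIdeal (Ggen σ) (semiInvariantsOn σ ![ξ₁, 1])
        (semiInvariantsOn σ ![ξ₁ ^ 3, 1])) ∧
    prodIdeal (Ggen σ) (semiInvariantsOn σ ![ξ₁, 1]) (semiInvariantsOn σ ![ξ₁ ^ 3, 1]) <
      traceIdeal (invariants (Ggen σ)) (semiInvariantsOn σ ![ξ₁, 1]) :=
  statement18_general ξ₁ ξ₂ hξ₁ hξ₂ σ hσ₁ hσ₂0 hσ₂1 hσ₂2
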